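/- Let P ∈ ℝ^{n×k}, let Q ∈ ℝ^{m×k} have full column rank, let y ∈ ℝ^m, and set K := QᵀQ, c := K^{-1/2} Qᵀ y, s := √(yᵀy − cᵀc), and R := P K^{1/2} ∈ ℝ^{n×k}. Then for every w ∈ ℝ^n, ‖Q Pᵀ w − y‖₂² = ‖Rᵀ w − c‖₂² + s². Consequently, for all ε ≥ 0 and λ ≥ 0, the optimal value of min_{w} ‖Q Pᵀ w − y‖₂ + ε‖w‖₂ + λ‖w‖₁ equals the optimal value of min_{w} √(‖Rᵀ w − c‖₂² + s²) + ε‖w‖₂ + λ‖w‖₁. -/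

import Mathlib

open Matrix

/-- Euclidean norm of a vector in `ℝ^n`. -/
noncomputable def norm2 {n : ℕ} (x : Fin n → ℝ) : ℝ := Real.sqrt (∑ i, x i ^ 2)

/-- ℓ1 norm of a vector in `ℝ^n`. -/
noncomputable def norm1 {n : ℕ} (x : Fin n → ℝ) : ℝ := ∑ i, |x i|

/-- The square root of a positive semidefinite matrix, as `Matrix.PosSemidef.sqrt` was defined
in older Mathlib (removed since). -/
noncomputable def Matrix.PosSemidef.sqrtOld {n : Type*} [Fintype n] [DecidableEq n]
    {A : Matrix n n ℝ} (hA : A.PosSemidef) : Matrix n n ℝ :=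
  hA.1.eigenvectorUnitary.1 * diagonal ((↑) ∘ (Real.sqrt ∘ hA.1.eigenvalues)) *
    (star hA.1.eigenvectorUnitary : Matrix n n ℝ)

/-!
With `S := K^{1/2}` and `v := Pᵀw`, both `‖Qv - y‖²` and `‖Sv - c‖²` are quadratics in `v` with
quadratic part `vᵀKv` (as `SᵀS = QᵀQ = K`) and linear part `-2 vᵀQᵀy` (as `Sᵀc = Qᵀy`), so they
differ by the constant `yᵀy - cᵀc`. That constant is `≥ 0` because it is the residual `‖Qv - y‖²`
at `v = S⁻¹c`, so `s² = yᵀy - cᵀc` and the two objectives agree pointwise.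
-/

section LeastSquares

variable {ι κ R : Type*} [Fintype ι] [Fintype κ]

theorem dotProduct_mulVec_sub_self_eq [CommRing R] {Q : Matrix ι κ R} {S : Matrix κ κ R}
    {y : ι → R} {c : κ → R} (hS : Sᵀ * S = Qᵀ * Q) (hc : Sᵀ *ᵥ c = Qᵀ *ᵥ y) (v : κ → R) :
    (Q *ᵥ v - y) ⬝ᵥ (Q *ᵥ v - y) = (S *ᵥ v - c) ⬝ᵥ (S *ᵥ v - c) + (y ⬝ᵥ y - c ⬝ᵥ c) := by
  have hquad : (Q *ᵥ v) ⬝ᵥ (Q *ᵥ v) = (S *ᵥ v) ⬝ᵥ (S *ᵥ v) := by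
    rw [dotProduct_mulVec, dotProduct_mulVec, ← mulVec_transpose, ← mulVec_transpose,
      mulVec_mulVec, mulVec_mulVec, hS]
  have hlin : y ⬝ᵥ (Q *ᵥ v) = c ⬝ᵥ (S *ᵥ v) := by
    rw [dotProduct_mulVec, dotProduct_mulVec, ← mulVec_transpose, ← mulVec_transpose, hc]
  simp only [sub_dotProduct, dotProduct_sub, hquad, dotProduct_comm (Q *ᵥ v) y,
    dotProduct_comm (S *ᵥ v) c, hlin]
  ring

theorem dotProduct_self_sub_nonneg {Q : Matrix ι κ ℝ} {S : Matrix κ κ ℝ} {y : ι → ℝ}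
    {c : κ → ℝ} (hS : Sᵀ * S = Qᵀ * Q) (hc : Sᵀ *ᵥ c = Qᵀ *ᵥ y) {v : κ → ℝ}
    (hv : S *ᵥ v = c) : 0 ≤ y ⬝ᵥ y - c ⬝ᵥ c := by
  have := dotProduct_mulVec_sub_self_eq hS hc v
  rw [hv, sub_self, zero_dotProduct, zero_add] at this
  exact this ▸ dotProduct_self_star_nonneg _

end LeastSquares

theorem norm2_sq {n : ℕ} (x : Fin n → ℝ) : norm2 x ^ 2 = x ⬝ᵥ x := by
  rw [norm2, Real.sq_sqrt (Finset.sum_nonneg fun i _ => sq_nonneg _)]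
  simp only [dotProduct, sq]

theorem norm2_nonneg {n : ℕ} (x : Fin n → ℝ) : 0 ≤ norm2 x := Real.sqrt_nonneg _

namespace Matrix.PosSemidef

variable {ι : Type*} [Fintype ι] [DecidableEq ι] {A : Matrix ι ι ℝ}

theorem transpose_sqrtOld (hA : A.PosSemidef) : hA.sqrtOldᵀ = hA.sqrtOld := by
  have hherm : hA.sqrtOld.IsHermitian := by
    unfold sqrtOld
    rw [star_eq_conjTranspose]
    exact isHermitian_mul_mul_conjTranspose _
      (isHermitian_diagonal_of_self_adjoint _ (by ext i; simp))
  rwa [IsHermitian, conjTranspose_eq_transpose_of_trivial] at hherm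

theorem sqrtOld_mul_self (hA : A.PosSemidef) : hA.sqrtOld * hA.sqrtOld = A := by
  unfold sqrtOld
  have hU : (star hA.1.eigenvectorUnitary : Matrix ι ι ℝ) * hA.1.eigenvectorUnitary.1 = 1 :=
    Unitary.star_mul_self_of_mem hA.1.eigenvectorUnitary.2
  conv_rhs => rw [hA.1.spectral_theorem]
  simp only [Matrix.mul_assoc]
  rw [← Matrix.mul_assoc (star _) _, hU, Matrix.one_mul, ← Matrix.mul_assoc (diagonal _),
    diagonal_mul_diagonal, Unitary.conjStarAlgAut_apply, Matrix.mul_assoc]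
  congr 3
  funext i
  simp [Real.mul_self_sqrt (hA.eigenvalues_nonneg i)]

end Matrix.PosSemidef

theorem sketched_sqrt_lasso_reduction_general
    {n m k : ℕ} (P : Matrix (Fin n) (Fin k) ℝ) (Q : Matrix (Fin m) (Fin k) ℝ)
    (hK : (Qᵀ * Q).PosDef) (y : Fin m → ℝ) :
    ∀ c : Fin k → ℝ, c = (hK.posSemidef.sqrtOld)⁻¹.mulVec (Qᵀ.mulVec y) →
    ∀ s : ℝ, s = Real.sqrt (y ⬝ᵥ y - c ⬝ᵥ c) →
    ∀ R : Matrix (Fin n) (Fin k) ℝ, R = P * hK.posSemidef.sqrtOld →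
      (∀ w : Fin n → ℝ,
        norm2 ((Q * Pᵀ).mulVec w - y) ^ 2 = norm2 (Rᵀ.mulVec w - c) ^ 2 + s ^ 2) ∧
      ∀ ε lam : ℝ, 0 ≤ ε → 0 ≤ lam →
        (⨅ w : Fin n → ℝ,
            norm2 ((Q * Pᵀ).mulVec w - y) + ε * norm2 w + lam * norm1 w) =
          ⨅ w : Fin n → ℝ,
            Real.sqrt (norm2 (Rᵀ.mulVec w - c) ^ 2 + s ^ 2) + ε * norm2 w + lam * norm1 w := by
  intro c hc s hs R hR
  set S := hK.posSemidef.sqrtOld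
  have hSt : Sᵀ = S := hK.posSemidef.transpose_sqrtOld
  have hSS : Sᵀ * S = Qᵀ * Q := by rw [hSt]; exact hK.posSemidef.sqrtOld_mul_self
  have hSunit : IsUnit S.det := by
    have hKunit := hK.isUnit
    rw [← hSS, hSt] at hKunit
    exact (isUnit_iff_isUnit_det S).mp (isUnit_of_mul_isUnit_left hKunit)
  have hSc : Sᵀ *ᵥ c = Qᵀ *ᵥ y := by
    rw [hSt, hc, mulVec_mulVec, mul_nonsing_inv S hSunit, one_mulVec]
  have hgap : 0 ≤ y ⬝ᵥ y - c ⬝ᵥ c := dotProduct_self_sub_nonneg hSS hSc (v := S⁻¹ *ᵥ c)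
    (by rw [mulVec_mulVec, mul_nonsing_inv S hSunit, one_mulVec])
  have key : ∀ w : Fin n → ℝ,
      norm2 ((Q * Pᵀ).mulVec w - y) ^ 2 = norm2 (Rᵀ.mulVec w - c) ^ 2 + s ^ 2 := by
    intro w
    rw [norm2_sq, norm2_sq, hs, Real.sq_sqrt hgap, hR, transpose_mul, hSt, ← mulVec_mulVec,
      ← mulVec_mulVec]
    exact dotProduct_mulVec_sub_self_eq hSS hSc _
  refine ⟨key, fun ε lam _ _ => ?_⟩
  simp_rw [← key, Real.sqrt_sq (norm2_nonneg _)]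

/-- With `K := QᵀQ` positive definite, `c := K^{-1/2}Qᵀy`, `s := √(yᵀy − cᵀc)`, and
`R := P K^{1/2}`, one has `‖QPᵀw − y‖₂² = ‖Rᵀw − c‖₂² + s²` for all `w`; consequently the
optimal values of `min_w ‖QPᵀw − y‖₂ + ε‖w‖₂ + λ‖w‖₁` and
`min_w √(‖Rᵀw − c‖₂² + s²) + ε‖w‖₂ + λ‖w‖₁` coincide. -/
theorem sketched_sqrt_lasso_reduction
    {n m k : ℕ} (P : Matrix (Fin n) (Fin k) ℝ) (Q : Matrix (Fin m) (Fin k) ℝ)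
    (hQ : Q.rank = k) (hK : (Qᵀ * Q).PosDef) (y : Fin m → ℝ) :
    ∀ c : Fin k → ℝ, c = (hK.posSemidef.sqrtOld)⁻¹.mulVec (Qᵀ.mulVec y) →
    ∀ s : ℝ, s = Real.sqrt (y ⬝ᵥ y - c ⬝ᵥ c) →
    ∀ R : Matrix (Fin n) (Fin k) ℝ, R = P * hK.posSemidef.sqrtOld →
      (∀ w : Fin n → ℝ,
        norm2 ((Q * Pᵀ).mulVec w - y) ^ 2 = norm2 (Rᵀ.mulVec w - c) ^ 2 + s ^ 2) ∧
      ∀ ε lam : ℝ, 0 ≤ ε → 0 ≤ lam →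
        (⨅ w : Fin n → ℝ,
            norm2 ((Q * Pᵀ).mulVec w - y) + ε * norm2 w + lam * norm1 w) =
          ⨅ w : Fin n → ℝ,
            Real.sqrt (norm2 (Rᵀ.mulVec w - c) ^ 2 + s ^ 2) + ε * norm2 w + lam * norm1 w :=
  sketched_sqrt_lasso_reduction_general P Q hK y
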